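/- (First-order inverse problem, m = n = 2 core case) Let f(w¹₁, w¹₂, w²₁, w²₂) be a smooth function of a 2×2 matrix of variables such that every second partial derivative f_{w^j_i w^{j'}_{i'}} is skew-symmetric both under the exchange i ↔ i' and under j ↔ j' (so f_{w^j_i w^{j'}_{i'}} = -f_{w^j_{i'} w^{j'}_i} = -f_{w^{j'}_i w^j_{i'}}). Then f is of the form f = a + Σ b^j_i w^j_i + c·(w¹₁w²₂ - w¹₂w²₁) for constants a, b^j_i, c, i.e. affine plus a multiple of the determinant. -/

import Mathlib

/-- Partial derivative of `g : (ι → ℝ) → ℝ` with respect to the `i`-th coordinate. -/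
noncomputable def pd {ι : Type*} [DecidableEq ι] (i : ι) (g : (ι → ℝ) → ℝ)
    (v : ι → ℝ) : ℝ :=
  deriv (fun t => g (Function.update v i t)) (v i)

abbrev Idx := Fin 2 × Fin 2
abbrev EE := Idx → ℝ

lemma update_path (v : EE) (k : Idx) :
    HasDerivAt (fun t : ℝ => Function.update v k t) (Pi.single k 1) (v k) := by
  have he : (fun t : ℝ => Function.update v k t)
      = fun t : ℝ => v + (t - v k) • (Pi.single k 1 : EE) := by
    funext t j
    by_cases h : j = k
    · subst h; simp
    · simp [Function.update_of_ne h, Pi.single_apply, h]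
  rw [he]
  simpa using (((hasDerivAt_id (v k)).sub_const (v k)).smul_const (Pi.single k (1:ℝ) : EE)).const_add v

lemma pd_eq_fderiv {g : EE → ℝ} {v : EE} (k : Idx) (hg : DifferentiableAt ℝ g v) :
    pd k g v = fderiv ℝ g v (Pi.single k 1) := by
  have hgd : HasFDerivAt g (fderiv ℝ g v) (Function.update v k (v k)) := by
    rw [Function.update_eq_self]; exact hg.hasFDerivAt
  exact (hgd.comp_hasDerivAt (v k) (update_path v k)).deriv

lemma contDiff_D1 {f : EE → ℝ} (hf : ContDiff ℝ (⊤ : ℕ∞) f) (k : Idx) :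
    ContDiff ℝ (⊤ : ℕ∞) (fun w => fderiv ℝ f w (Pi.single k 1)) :=
  (hf.fderiv_right (by simp)).clm_apply contDiff_const

lemma pd_eq_D1 {f : EE → ℝ} (hf : ContDiff ℝ (⊤ : ℕ∞) f) (k : Idx) :
    (fun v => pd k f v) = fun w => fderiv ℝ f w (Pi.single k 1) := by
  funext v; exact pd_eq_fderiv k (hf.differentiable (by simp) v)

lemma pd_comm {g : EE → ℝ} (hg : ContDiff ℝ (⊤ : ℕ∞) g) (a b : Idx) (w : EE) :
    pd a (fun v => pd b g v) w = pd b (fun v => pd a g v) w := by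
  have key : ∀ c d : Idx,
      pd c (fun v => pd d g v) w = fderiv ℝ (fderiv ℝ g) w (Pi.single c 1) (Pi.single d 1) := by
    intro c d
    rw [pd_eq_D1 hg d, pd_eq_fderiv c ((contDiff_D1 hg d).differentiable (by simp) w)]
    rw [fderiv_clm_apply ((hg.fderiv_right (m := (⊤ : ℕ∞)) (by simp)).differentiable (by simp) w)
      (differentiableAt_const _)]
    simp
  rw [key, key]
  exact (hg.contDiffAt.isSymmSndFDerivAt (by rw [minSmoothness_of_isRCLikeNormedField]; exact WithTop.coe_le_coe.2 le_top)) _ _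

lemma const_of_pd_zero {g : EE → ℝ} (hg : ContDiff ℝ (⊤ : ℕ∞) g)
    (h0 : ∀ k w, pd k g w = 0) (v w : EE) : g v = g w := by
  apply is_const_of_fderiv_eq_zero (hg.differentiable (by simp))
  intro x
  ext u
  have hu : (u : EE) = ∑ k : Idx, u k • (Pi.single k 1 : EE) := by
    funext j
    simp [Pi.single_apply, Finset.sum_ite_eq]
  rw [ContinuousLinearMap.zero_apply, hu, map_sum]
  refine Finset.sum_eq_zero fun k _ => ?_
  rw [map_smul]
  have := h0 k x
  rw [pd_eq_fderiv k (hg.differentiable (by simp) x)] at this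
  simp [this]

lemma pd_sub {g₁ g₂ : EE → ℝ} {v : EE} (k : Idx) (h₁ : DifferentiableAt ℝ g₁ v)
    (h₂ : DifferentiableAt ℝ g₂ v) :
    pd k (fun w => g₁ w - g₂ w) v = pd k g₁ v - pd k g₂ v := by
  rw [pd_eq_fderiv (g := fun w => g₁ w - g₂ w) k (h₁.sub h₂), pd_eq_fderiv k h₁, pd_eq_fderiv k h₂, fderiv_fun_sub h₁ h₂]
  simp

lemma pd_const_mul {g : EE → ℝ} {v : EE} (c : ℝ) (k : Idx) (h : DifferentiableAt ℝ g v) :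
    pd k (fun w => c * g w) v = c * pd k g v := by
  rw [pd_eq_fderiv k (h.const_mul c), pd_eq_fderiv k h, fderiv_const_mul h c]
  simp

lemma pd_neg {g : EE → ℝ} {v : EE} (k : Idx) :
    pd k (fun w => -g w) v = -pd k g v := by
  simp [pd, deriv.neg]

lemma pd_congr {g₁ g₂ : EE → ℝ} {v : EE} (k : Idx) (h : ∀ w, g₁ w = g₂ w) :
    pd k g₁ v = pd k g₂ v := by
  have : g₁ = g₂ := funext h
  rw [this]

lemma pd_zero_fun {v : EE} (k : Idx) : pd k (fun _ => (0:ℝ)) v = 0 := by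
  simp [pd]

lemma pd_apply (m k : Idx) (v : EE) :
    pd k (fun w => w m) v = if m = k then 1 else 0 := by
  by_cases h : m = k
  · subst h; simp [pd, Function.update_self]
  · simp [pd, Function.update_of_ne h, h]

noncomputable def Dt : EE → ℝ := fun w => w (0,0) * w (1,1) - w (0,1) * w (1,0)

lemma cd_apply (m : Idx) : ContDiff ℝ (⊤ : ℕ∞) (fun w : EE => w m) :=
  (ContinuousLinearMap.proj m : EE →L[ℝ] ℝ).contDiff

lemma cdDt : ContDiff ℝ (⊤ : ℕ∞) Dt :=
  ((cd_apply _).mul (cd_apply _)).sub ((cd_apply _).mul (cd_apply _))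

lemma pdDt00 : ∀ v : EE, pd (0,0) Dt v = 1 * v (1,1) := by
  intro v
  have h1 : ((1,1) : Idx) ≠ (0,0) := by decide
  have h2 : ((0,1) : Idx) ≠ (0,0) := by decide
  have h3 : ((1,0) : Idx) ≠ (0,0) := by decide
  simp only [pd, Dt, Function.update_self, Function.update_of_ne h1,
    Function.update_of_ne h2, Function.update_of_ne h3]
  simpa using (((hasDerivAt_id (v (0,0))).mul_const (v (1,1))).sub_const
    (v (0,1) * v (1,0))).deriv

lemma pdDt01 : ∀ v : EE, pd (0,1) Dt v = (-1) * v (1,0) := by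
  intro v
  have h1 : ((0,0) : Idx) ≠ (0,1) := by decide
  have h2 : ((1,1) : Idx) ≠ (0,1) := by decide
  have h3 : ((1,0) : Idx) ≠ (0,1) := by decide
  simp only [pd, Dt, Function.update_self, Function.update_of_ne h1,
    Function.update_of_ne h2, Function.update_of_ne h3]
  have := (((hasDerivAt_id (v (0,1))).mul_const (v (1,0))).const_sub
    (v (0,0) * v (1,1))).deriv
  simpa using this
  
lemma pdDt10 : ∀ v : EE, pd (1,0) Dt v = (-1) * v (0,1) := by
  intro v
  have h1 : ((0,0) : Idx) ≠ (1,0) := by decide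
  have h2 : ((1,1) : Idx) ≠ (1,0) := by decide
  have h3 : ((0,1) : Idx) ≠ (1,0) := by decide
  simp only [pd, Dt, Function.update_self, Function.update_of_ne h1,
    Function.update_of_ne h2, Function.update_of_ne h3]
  have := (((hasDerivAt_id (v (1,0))).const_mul (v (0,1))).const_sub
    (v (0,0) * v (1,1))).deriv
  simpa using this

lemma pdDt11 : ∀ v : EE, pd (1,1) Dt v = 1 * v (0,0) := by
  intro v
  have h1 : ((0,0) : Idx) ≠ (1,1) := by decide
  have h2 : ((0,1) : Idx) ≠ (1,1) := by decide
  have h3 : ((1,0) : Idx) ≠ (1,1) := by decide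
  simp only [pd, Dt, Function.update_self, Function.update_of_ne h1,
    Function.update_of_ne h2, Function.update_of_ne h3]
  simpa [mul_comm] using (((hasDerivAt_id (v (1,1))).const_mul (v (0,0))).sub_const
    (v (0,1) * v (1,0))).deriv

lemma pd_linsum (b : Idx → ℝ) (k : Idx) (v : EE) :
    pd k (fun w => ∑ m, b m * w m) v = b k := by
  have he : (fun t : ℝ => ∑ m, b m * Function.update v k t m)
      = fun t : ℝ => b k * t + ∑ m ∈ Finset.univ.erase k, b m * v m := by
    funext t
    rw [← Finset.add_sum_erase _ _ (Finset.mem_univ k)]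
    congr 1
    · rw [Function.update_self]
    · exact Finset.sum_congr rfl fun m hm => by
        rw [Function.update_of_ne (Finset.ne_of_mem_erase hm)]
  show deriv (fun t => ∑ m, b m * Function.update v k t m) (v k) = b k
  have hd : HasDerivAt (fun t : ℝ => b k * t + ∑ m ∈ Finset.univ.erase k, b m * v m)
      (b k) (v k) := by
    simpa using ((hasDerivAt_id (v k)).const_mul (b k)).add_const
      (∑ m ∈ Finset.univ.erase k, b m * v m)
  rw [he, hd.deriv]

/-- If a smooth function `f` of a 2×2 matrix of variables `w^j_i`
(index `(j,i)`) has all second partial derivatives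
`H_{(j,i),(j',i')} = ∂²f/∂w^j_i∂w^{j'}_{i'}` skew-symmetric both in the lower
indices `i ↔ i'` and the upper indices `j ↔ j'`, then
`f = a + Σ b^j_i w^j_i + c·det(w)`. -/
theorem stmt_12 (f : (Fin 2 × Fin 2 → ℝ) → ℝ)
    (hf : ContDiff ℝ (⊤ : ℕ∞) f)
    (H : Fin 2 → Fin 2 → Fin 2 → Fin 2 → (Fin 2 × Fin 2 → ℝ) → ℝ)
    (hH : ∀ j i j' i' w, H j i j' i' w = pd (j, i) (fun v => pd (j', i') f v) w)
    (hskew_lower : ∀ j i j' i' w, H j i j' i' w = -H j i' j' i w)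
    (hskew_upper : ∀ j i j' i' w, H j i j' i' w = -H j' i j i' w) :
    ∃ (a : ℝ) (b : Fin 2 → Fin 2 → ℝ) (c : ℝ), ∀ w,
      f w = a + (∑ j, ∑ i, b j i * w (j, i))
        + c * (w (0, 0) * w (1, 1) - w (0, 1) * w (1, 0)) := by
  have hfd : Differentiable ℝ f := hf.differentiable (by simp)
  have hz1 : ∀ j i j' w, H j i j' i w = 0 := by
    intro j i j' w; have := hskew_lower j i j' i w; linarith
  have hz2 : ∀ j i i' w, H j i j i' w = 0 := by
    intro j i i' w; have := hskew_upper j i j i' w; linarith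
  have hpdf : ∀ k : Idx, ContDiff ℝ (⊤ : ℕ∞) (fun v => pd k f v) := fun k => by
    rw [pd_eq_D1 hf k]; exact contDiff_D1 hf k
  have hsymm : ∀ j i j' i' w, H j i j' i' w = H j' i' j i w := by
    intro j i j' i' w
    rw [hH, hH]
    exact pd_comm hf _ _ w
  -- the function h = H 0 0 1 1 is smooth and has all partials zero
  have hsmooth_h : ContDiff ℝ (⊤ : ℕ∞) (fun w => H 0 0 1 1 w) := by
    have e : (fun w => H 0 0 1 1 w) = fun v => pd (0,0) (fun u => pd (1,1) f u) v :=
      funext fun w => hH 0 0 1 1 w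
    rw [e, pd_eq_D1 (hpdf (1,1)) (0,0)]
    exact contDiff_D1 (hpdf (1,1)) (0,0)
  have cases4 : ∀ k : Idx, k = (0,0) ∨ k = (0,1) ∨ k = (1,0) ∨ k = (1,1) := by decide
  have cases2 : ∀ x : Fin 2, x = 0 ∨ x = 1 := by decide
  have hpd_h : ∀ (k : Idx) w, pd k (fun v => H 0 0 1 1 v) w = 0 := by
    intro k w
    rcases cases4 k with h|h|h|h <;> subst h
    · -- (0,0)
      have e1 : ∀ v, H 0 0 1 1 v = -(pd (0,1) (fun u => pd (1,0) f u) v) := by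
        intro v; rw [hskew_lower 0 0 1 1 v, hH]
      rw [pd_congr _ e1, pd_neg,
        pd_comm (hpdf (1,0)) (0,0) (0,1) w,
        pd_congr (0,1) (fun v => (hH 0 0 1 0 v).symm),
        pd_congr (0,1) (fun v => hz1 0 0 1 v), pd_zero_fun]
      ring
    · -- (0,1)
      rw [pd_congr _ (fun v => hH 0 0 1 1 v),
        pd_comm (hpdf (1,1)) (0,1) (0,0) w,
        pd_congr (0,0) (fun v => (hH 0 1 1 1 v).symm),
        pd_congr (0,0) (fun v => hz1 0 1 1 v), pd_zero_fun]
    · -- (1,0)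
      rw [pd_congr _ (fun v => hH 0 0 1 1 v),
        pd_comm (hpdf (1,1)) (1,0) (0,0) w,
        pd_congr (0,0) (fun v => (hH 1 0 1 1 v).symm),
        pd_congr (0,0) (fun v => hz2 1 0 1 v), pd_zero_fun]
    · -- (1,1)
      rw [pd_congr _ (fun v => hH 0 0 1 1 v),
        pd_comm (hpdf (1,1)) (1,1) (0,0) w,
        pd_congr (0,0) (fun v => (hH 1 1 1 1 v).symm),
        pd_congr (0,0) (fun v => hz1 1 1 1 v), pd_zero_fun]
  set c : ℝ := H 0 0 1 1 0 with hc_def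
  have hv1 : ∀ w, H 0 0 1 1 w = c :=
    fun w => const_of_pd_zero hsmooth_h hpd_h w 0
  have hv2 : ∀ w, H 1 1 0 0 w = c := fun w => (hsymm 1 1 0 0 w).trans (hv1 w)
  have hv3 : ∀ w, H 0 1 1 0 w = -c := fun w => by rw [hskew_lower 0 1 1 0 w, hv1 w]
  have hv4 : ∀ w, H 1 0 0 1 w = -c := fun w => by rw [hsymm 1 0 0 1 w]; exact hv3 w
  have htab : ∀ (j i j' i' : Fin 2) w, H j i j' i' w
      = (if j = j' ∨ i = i' then 0 else if i = j then 1 else -1) * c := by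
    intro j i j' i' w
    rcases cases2 j with hj|hj <;> subst hj <;>
    rcases cases2 i with hi|hi <;> subst hi <;>
    rcases cases2 j' with hj'|hj' <;> subst hj' <;>
    rcases cases2 i' with hi'|hi' <;> subst hi' <;>
      norm_num <;>
      first
        | exact hz1 _ _ _ w
        | exact hz2 _ _ _ w
        | exact hv1 w
        | exact hv2 w
        | exact hv3 w
        | exact hv4 w
  -- g = f - c * det
  set g : EE → ℝ := fun w => f w - c * Dt w with hg_def
  have hg_smooth : ContDiff ℝ (⊤ : ℕ∞) g := hf.sub (contDiff_const.mul cdDt)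
  have hgd : Differentiable ℝ g := hg_smooth.differentiable (by simp)
  have hDd : Differentiable ℝ Dt := cdDt.differentiable (by simp)
  have hpdg : ∀ (k : Idx) v, pd k g v = pd k f v - c * pd k Dt v := by
    intro k v
    rw [hg_def]
    rw [pd_sub k (hfd v) ((hDd v).const_mul c), pd_const_mul c k (hDd v)]
  have hpdg_smooth : ∀ k : Idx, ContDiff ℝ (⊤ : ℕ∞) (fun v => pd k g v) := fun k => by
    rw [pd_eq_D1 hg_smooth k]; exact contDiff_D1 hg_smooth k
  have base : ∀ (a b : Fin 2) (m : Idx) (s : ℝ),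
      (∀ v, pd (a,b) Dt v = s * v m) → ∀ (j' i' : Fin 2) (w : EE),
      pd (j',i') (fun v => pd (a,b) g v) w
        = H j' i' a b w - c * s * (if m = (j',i') then 1 else 0) := by
    intro a b m s hDk j' i' w
    have e : ∀ v, pd (a,b) g v = pd (a,b) f v - c * s * v m := by
      intro v; rw [hpdg, hDk]; ring
    rw [pd_congr _ e,
      pd_sub _ ((hpdf (a,b)).differentiable (by simp) w)
        (((cd_apply m).differentiable (by simp) w).const_mul (c * s)),
      pd_const_mul (c * s) _ ((cd_apply m).differentiable (by simp) w),
      pd_apply, hH j' i' a b w]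
  have hpd2g : ∀ (k : Idx) (j' i' : Fin 2) (w : EE),
      pd (j',i') (fun v => pd k g v) w = 0 := by
    intro k j' i' w
    rcases cases4 k with h|h|h|h <;> subst h
    · rw [base 0 0 (1,1) 1 pdDt00 j' i' w, htab]
      rcases cases2 j' with hj'|hj' <;> subst hj' <;>
      rcases cases2 i' with hi'|hi' <;> subst hi' <;>
        norm_num [Prod.ext_iff, Fin.ext_iff]
    · rw [base 0 1 (1,0) (-1) pdDt01 j' i' w, htab]
      rcases cases2 j' with hj'|hj' <;> subst hj' <;>
      rcases cases2 i' with hi'|hi' <;> subst hi' <;>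
        norm_num [Prod.ext_iff, Fin.ext_iff]
    · rw [base 1 0 (0,1) (-1) pdDt10 j' i' w, htab]
      rcases cases2 j' with hj'|hj' <;> subst hj' <;>
      rcases cases2 i' with hi'|hi' <;> subst hi' <;>
        norm_num [Prod.ext_iff, Fin.ext_iff]
    · rw [base 1 1 (0,0) 1 pdDt11 j' i' w, htab]
      rcases cases2 j' with hj'|hj' <;> subst hj' <;>
      rcases cases2 i' with hi'|hi' <;> subst hi' <;>
        norm_num [Prod.ext_iff, Fin.ext_iff]
  have hpd2g' : ∀ (k k' : Idx) (w : EE), pd k' (fun v => pd k g v) w = 0 := by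
    intro k k' w
    obtain ⟨j', i'⟩ := k'
    exact hpd2g k j' i' w
  have hbconst : ∀ (k : Idx) v, pd k g v = pd k g 0 := fun k v =>
    const_of_pd_zero (hpdg_smooth k) (fun k' w => hpd2g' k k' w) v 0
  -- F = g - linear part
  set b' : Idx → ℝ := fun k => pd k g 0 with hb'_def
  set F : EE → ℝ := fun w => g w - ∑ m, b' m * w m with hF_def
  have hF_smooth : ContDiff ℝ (⊤ : ℕ∞) F :=
    hg_smooth.sub (ContDiff.sum fun m _ => contDiff_const.mul (cd_apply m))
  have hlind : Differentiable ℝ (fun w : EE => ∑ m, b' m * w m) :=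
    (ContDiff.sum fun m _ => contDiff_const.mul (cd_apply m)).differentiable (by simp)
  have hpdF : ∀ (k : Idx) v, pd k F v = 0 := by
    intro k v
    rw [hF_def, pd_sub k (hgd v) (hlind v), pd_linsum, hbconst k v]
    ring
  have hFc : ∀ w, F w = F 0 := fun w => const_of_pd_zero hF_smooth hpdF w 0
  have hF0 : F 0 = f 0 := by
    simp [hF_def, hg_def, Dt]
  refine ⟨f 0, fun j i => b' (j, i), c, fun w => ?_⟩
  have hw := (hFc w).trans hF0
  rw [hF_def] at hw
  simp only [hg_def, Dt] at hw
  have hsum : (∑ m : Idx, b' m * w m) = ∑ j, ∑ i, b' (j, i) * w (j, i) :=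
    Fintype.sum_prod_type (f := fun m : Idx => b' m * w m)
  rw [hsum] at hw
  linarith
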